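/- Let z = (z₁, z₂) ∈ ℂ² with z₂ ≠ 0. Then |z₁ + e^{i log|z₂|²}|² < 1 if and only if z₁ ≠ 0, |z₁| < 2, and |π - Im log^{|z₂|}(z₁) + log|z₂|²| < arccos(|z₁|/2). Moreover, when these hold one has |π - Im log^{|z₂|}(z₁) + log|z₂|²| < π/2. -/

import Mathlib

open MeasureTheory

/-- `log^t(z)`: the branch of the logarithm of `z` whose imaginary part lies in
`[log t², log t² + 2π)`. -/
noncomputable def logT (t : ℝ) (z : ℂ) : ℂ :=
  Complex.log z +
    ((2 * Real.pi * (⌈(Real.log (t ^ 2) - (Complex.log z).im) / (2 * Real.pi)⌉ : ℤ) : ℝ) : ℂ) *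
      Complex.I

/-- `ρ̃(z) = |z₁ + e^{i log|z₂|²}|² - 1`. -/
noncomputable def rhoT (z : ℂ × ℂ) : ℝ :=
  ‖z.1 + Complex.exp (Complex.I * (Real.log (‖z.2‖ ^ 2) : ℂ))‖ ^ 2 - 1

/-! Put `E = π - Im log^t(a) + log t²`. The choice of branch in `log^t` puts `E` in `(-π, π]`, and
`|a + e^{i log t²}|² = |a|² - 2 |a| cos E + 1`. So the condition `|a + e^{i log t²}|² < 1` reads
`0 < |a| < 2 cos E`, which for `|E| ≤ π` means `0 < |a| < 2` and `|E| < arccos (|a|/2)`; finally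
`arccos (|a|/2) < π/2` because `a ≠ 0`. -/

open Real

lemma lt_arccos_iff_lt_cos {x y : ℝ} (hx₀ : 0 ≤ x) (hxπ : x ≤ π) (hy : y ∈ Set.Icc (-1) 1) :
    x < arccos y ↔ y < cos x := by
  conv_lhs => rw [← arccos_cos hx₀ hxπ]
  exact strictAntiOn_arccos.lt_iff_gt ⟨neg_one_le_cos x, cos_le_one x⟩ hy

lemma lt_two_mul_cos_iff {r E : ℝ} (hr : 0 ≤ r) (hE : |E| ≤ π) :
    r < 2 * cos E ↔ r < 2 ∧ |E| < arccos (r / 2) := by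
  constructor
  · intro h
    have hr2 : r < 2 := by linarith [cos_le_one E]
    refine ⟨hr2, (lt_arccos_iff_lt_cos (abs_nonneg E) hE ⟨by linarith, by linarith⟩).2 ?_⟩
    rw [cos_abs]
    linarith
  · rintro ⟨hr2, hE'⟩
    have := (lt_arccos_iff_lt_cos (abs_nonneg E) hE ⟨by linarith, by linarith⟩).1 hE'
    rw [cos_abs] at this
    linarith

lemma sq_sub_two_mul_mul_cos_neg_iff {r E : ℝ} (hr : 0 ≤ r) (hE : |E| ≤ π) :
    r ^ 2 - 2 * r * cos E < 0 ↔ 0 < r ∧ r < 2 ∧ |E| < arccos (r / 2) := by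
  have hfactor : r ^ 2 - 2 * r * cos E = r * (r - 2 * cos E) := by ring
  rw [hfactor, mul_neg_iff, ← lt_two_mul_cos_iff hr hE]
  constructor
  · rintro (⟨hr₀, h⟩ | ⟨hneg, -⟩)
    · exact ⟨hr₀, by linarith⟩
    · linarith
  · rintro ⟨hr₀, h⟩
    exact Or.inl ⟨hr₀, by linarith⟩

lemma logT_im (t : ℝ) (z : ℂ) :
    (logT t z).im = Complex.arg z + 2 * π * ⌈(Real.log (t ^ 2) - Complex.arg z) / (2 * π)⌉ := by
  simp [logT, Complex.log_im]

lemma logT_im_mem_Ico (t : ℝ) (z : ℂ) :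
    (logT t z).im ∈ Set.Ico (Real.log (t ^ 2)) (Real.log (t ^ 2) + 2 * π) := by
  have h2π : 0 < 2 * π := by positivity
  set q := (Real.log (t ^ 2) - Complex.arg z) / (2 * π)
  have hle : q ≤ ⌈q⌉ := Int.le_ceil q
  have hlt : (⌈q⌉ : ℝ) < q + 1 := Int.ceil_lt_add_one q
  have hq : 2 * π * q = Real.log (t ^ 2) - Complex.arg z := mul_div_cancel₀ _ h2π.ne'
  rw [logT_im]
  constructor <;> nlinarith

lemma cos_pi_sub_logT_im_add (t θ : ℝ) (z : ℂ) :
    cos (π - (logT t z).im + θ) = -cos (Complex.arg z - θ) := by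
  rw [logT_im]
  set k : ℤ := ⌈(Real.log (t ^ 2) - Complex.arg z) / (2 * π)⌉
  rw [show π - (Complex.arg z + 2 * π * k) + θ = π - (Complex.arg z - θ) - k * (2 * π) by ring,
    cos_sub_int_mul_two_pi, cos_pi_sub]

lemma norm_add_exp_I_mul_sq (a : ℂ) (θ : ℝ) :
    ‖a + Complex.exp (Complex.I * θ)‖ ^ 2 = ‖a‖ ^ 2 + 2 * ‖a‖ * cos (Complex.arg a - θ) + 1 := by
  have hexp : ‖Complex.exp (Complex.I * θ)‖ = 1 := by simp [Complex.norm_exp]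
  have hcross : a * (starRingEnd ℂ) (Complex.exp (Complex.I * θ)) =
      ‖a‖ * Complex.exp ((Complex.arg a - θ : ℝ) * Complex.I) := by
    rw [← Complex.exp_conj]
    conv_lhs => rw [← Complex.norm_mul_exp_arg_mul_I a]
    rw [mul_assoc, ← Complex.exp_add]
    congr 2
    simp only [map_mul, Complex.conj_I, Complex.conj_ofReal]
    push_cast
    ring
  rw [Complex.sq_norm, Complex.normSq_add, ← Complex.sq_norm a, ← Complex.sq_norm, hexp, hcross,
    Complex.re_ofReal_mul, Complex.exp_ofReal_mul_I_re]
  ring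

theorem defining_function_interior_general (z : ℂ × ℂ) :
    (‖z.1 + Complex.exp (Complex.I * (Real.log (‖z.2‖ ^ 2) : ℂ))‖ ^ 2 < 1 ↔
      z.1 ≠ 0 ∧ ‖z.1‖ < 2 ∧
        |Real.pi - (logT (‖z.2‖) z.1).im + Real.log (‖z.2‖ ^ 2)| <
          Real.arccos (‖z.1‖ / 2)) ∧
    (‖z.1 + Complex.exp (Complex.I * (Real.log (‖z.2‖ ^ 2) : ℂ))‖ ^ 2 < 1 →
      |Real.pi - (logT (‖z.2‖) z.1).im + Real.log (‖z.2‖ ^ 2)| <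
        Real.pi / 2) := by
  set E := π - (logT ‖z.2‖ z.1).im + Real.log (‖z.2‖ ^ 2)
  have hE : |E| ≤ π := by
    obtain ⟨hlow, hhigh⟩ := logT_im_mem_Ico ‖z.2‖ z.1
    rw [abs_le]
    constructor <;> linarith
  have hnorm : ‖z.1 + Complex.exp (Complex.I * (Real.log (‖z.2‖ ^ 2) : ℂ))‖ ^ 2 - 1 =
      ‖z.1‖ ^ 2 - 2 * ‖z.1‖ * cos E := by
    rw [norm_add_exp_I_mul_sq, cos_pi_sub_logT_im_add]
    ring
  have hiff : ‖z.1 + Complex.exp (Complex.I * (Real.log (‖z.2‖ ^ 2) : ℂ))‖ ^ 2 < 1 ↔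
      z.1 ≠ 0 ∧ ‖z.1‖ < 2 ∧ |E| < arccos (‖z.1‖ / 2) := by
    rw [← sub_neg, hnorm, sq_sub_two_mul_mul_cos_neg_iff (norm_nonneg _) hE, norm_pos_iff]
  refine ⟨hiff, fun h => ?_⟩
  obtain ⟨hz₁, -, hE_lt⟩ := hiff.1 h
  exact hE_lt.trans (arccos_lt_pi_div_two.2 (by positivity))

theorem defining_function_interior (z : ℂ × ℂ) (hz : z.2 ≠ 0) :
    (‖z.1 + Complex.exp (Complex.I * (Real.log (‖z.2‖ ^ 2) : ℂ))‖ ^ 2 < 1 ↔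
      z.1 ≠ 0 ∧ ‖z.1‖ < 2 ∧
        |Real.pi - (logT (‖z.2‖) z.1).im + Real.log (‖z.2‖ ^ 2)| <
          Real.arccos (‖z.1‖ / 2)) ∧
    (‖z.1 + Complex.exp (Complex.I * (Real.log (‖z.2‖ ^ 2) : ℂ))‖ ^ 2 < 1 →
      |Real.pi - (logT (‖z.2‖) z.1).im + Real.log (‖z.2‖ ^ 2)| <
        Real.pi / 2) :=
  defining_function_interior_general z
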